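/- As temperature τ → 0⁺, softmax concentrates on the argmax: if z : ι → ℝ has a unique maximizer i₀ (z i < z i₀ for all i ≠ i₀), then for each i ≠ i₀ the weight exp(z i / τ) / ∑ j, exp(z j / τ) tends to 0 and the weight at i₀ tends to 1 as τ → 0 from the right. -/
import Mathlib

open Filter Real

theorem softmax_concentrates_on_argmax
    {ι : Type*} [Fintype ι] [Nonempty ι] (z : ι → ℝ) (i₀ : ι)
    (hmax : ∀ i, i ≠ i₀ → z i < z i₀) :
    (∀ i, i ≠ i₀ →
      Filter.Tendsto (fun τ : ℝ => Real.exp (z i / τ) / ∑ j, Real.exp (z j / τ))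
        (nhdsWithin 0 (Set.Ioi 0)) (nhds 0)) ∧
    Filter.Tendsto (fun τ : ℝ => Real.exp (z i₀ / τ) / ∑ j, Real.exp (z j / τ))
      (nhdsWithin 0 (Set.Ioi 0)) (nhds 1) := by
  classical
  -- limit of each shifted exponential
  have hd : ∀ i : ι, i ≠ i₀ →
      Tendsto (fun τ : ℝ => Real.exp ((z i - z i₀) / τ)) (nhdsWithin 0 (Set.Ioi 0)) (nhds 0) := by
    intro i hi
    have hneg : z i - z i₀ < 0 := sub_neg.mpr (hmax i hi)
    have h1 : Tendsto (fun τ : ℝ => (z i - z i₀) / τ) (nhdsWithin 0 (Set.Ioi 0)) atBot := by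
      simpa [div_eq_mul_inv] using tendsto_inv_nhdsGT_zero.const_mul_atTop_of_neg hneg
    exact Real.tendsto_exp_atBot.comp h1
  -- limit of the shifted denominator
  have hS : Tendsto (fun τ : ℝ => ∑ j, Real.exp ((z j - z i₀) / τ))
      (nhdsWithin 0 (Set.Ioi 0)) (nhds 1) := by
    have h1 : Tendsto (fun τ : ℝ => ∑ j, Real.exp ((z j - z i₀) / τ))
        (nhdsWithin 0 (Set.Ioi 0)) (nhds (∑ j, if j = i₀ then (1:ℝ) else 0)) := by
      apply tendsto_finset_sum
      intro j _
      classical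
      by_cases h : j = i₀
      · subst h
        simp only [sub_self, zero_div, Real.exp_zero, if_pos rfl]
        exact tendsto_const_nhds
      · simpa [h] using hd j h
    simpa using h1
  -- pointwise rewriting on (0, ∞)
  have key : ∀ i : ι, ∀ τ ∈ Set.Ioi (0:ℝ),
      Real.exp ((z i - z i₀) / τ) / ∑ j, Real.exp ((z j - z i₀) / τ)
        = Real.exp (z i / τ) / ∑ j, Real.exp (z j / τ) := by
    intro i τ _
    have hc : Real.exp (z i₀ / τ) ≠ 0 := (Real.exp_pos _).ne'
    have hrw : ∀ j : ι, Real.exp ((z j - z i₀) / τ)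
        = Real.exp (z j / τ) / Real.exp (z i₀ / τ) := fun j => by
      rw [sub_div, Real.exp_sub]
    have hb : (0:ℝ) < ∑ j, Real.exp (z j / τ) :=
      Finset.sum_pos (fun j _ => Real.exp_pos _) Finset.univ_nonempty
    simp only [hrw, ← Finset.sum_div]
    rw [div_div_div_cancel_right₀]
    exact hc
  constructor
  · intro i hi
    have := (hd i hi).div hS one_ne_zero
    simp only [zero_div] at this
    exact this.congr' (eventually_nhdsWithin_of_forall (key i))
  · have h0 : Tendsto (fun τ : ℝ => Real.exp ((z i₀ - z i₀) / τ)) (nhdsWithin 0 (Set.Ioi 0))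
        (nhds 1) := by simp only [sub_self, zero_div, Real.exp_zero]; exact (tendsto_const_nhds : Tendsto (fun _ : ℝ => (1:ℝ)) (nhdsWithin 0 (Set.Ioi 0)) (nhds 1))
    have := h0.div hS one_ne_zero
    simp only [div_one] at this
    exact this.congr' (eventually_nhdsWithin_of_forall (key i₀))
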